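/- arXiv:1804.10349 — 2 statements merged into one kernel-verified Lean document; each statement's English description precedes it below -/
import Mathlib

section
/- Each of the spaces (N̄^q_{Δ⁻})_∞, equipped with the norm ‖x‖ = sup_n |τ_n(x)|, is a BK space: it is a Banach space over ℂ and, for each k, the coordinate functional x ↦ x_k is continuous on it. -/
open Finset Filter Topology

namespace NqDelta

noncomputable section

/-- `Qs q n = ∑_{i=0}^n q i`. -/
def Qs (q : ℕ → ℝ) (n : ℕ) : ℝ := ∑ i ∈ Finset.range (n + 1), q i

/-- The difference operator `(Δ⁻ x)_k = x_{k-1} - x_k`, with `x_{-1} = 0`. -/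
def deltaM (x : ℕ → ℂ) (k : ℕ) : ℂ := (if k = 0 then 0 else x (k - 1)) - x k

/-- `τ_n(x) = (1/Q_n) ∑_{k=0}^n q_k (Δ⁻ x)_k`. -/
def tau (q : ℕ → ℝ) (x : ℕ → ℂ) (n : ℕ) : ℂ :=
  ((Qs q n : ℂ))⁻¹ * ∑ k ∈ Finset.range (n + 1), (q k : ℂ) * deltaM x k

/-- The space `(N̄^q_{Δ⁻})_0 = {x : τ_n(x) → 0}`. -/
def Nzero (q : ℕ → ℝ) : Set (ℕ → ℂ) := {x | Tendsto (tau q x) atTop (𝓝 0)}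

/-- The space `(N̄^q_{Δ⁻}) = {x : (τ_n(x)) converges}`. -/
def Nconv (q : ℕ → ℝ) : Set (ℕ → ℂ) := {x | ∃ l : ℂ, Tendsto (tau q x) atTop (𝓝 l)}

/-- The space `(N̄^q_{Δ⁻})_∞ = {x : sup_n |τ_n(x)| < ∞}`. -/
def Ninf (q : ℕ → ℝ) : Set (ℕ → ℂ) := {x | ∃ M : ℝ, ∀ n, ‖tau q x n‖ ≤ M}

/-- The norm `‖x‖ = sup_n |τ_n(x)|`. -/
def Nnorm (q : ℕ → ℝ) (x : ℕ → ℂ) : ℝ := ⨆ n, ‖tau q x n‖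

/-- The `m`-th section `x^{[m]} = (x_0, …, x_m, 0, 0, …)` of a sequence `x`. -/
def secTrunc (x : ℕ → ℂ) (m : ℕ) : ℕ → ℂ := fun k => if k ≤ m then x k else 0

/-- The sequence `s^{(k)}`: `s^{(k)}_n = Q_k(1/q_{k+1} - 1/q_k)` for `n > k`,
`s^{(k)}_k = -Q_k/q_k`, and `s^{(k)}_n = 0` for `n < k`. -/
def sseq (q : ℕ → ℝ) (k : ℕ) : ℕ → ℂ := fun n =>
  if n < k then 0
  else if n = k then ((-(Qs q k / q k) : ℝ) : ℂ)
  else ((Qs q k * (1 / q (k + 1) - 1 / q k) : ℝ) : ℂ)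

/-- The sequence `s^{(-1)}`, with `s^{(-1)}_n = ∑_{k=0}^{n-1} Q_k(1/q_{k+1} - 1/q_k) - Q_n/q_n`. -/
def sminus (q : ℕ → ℝ) : ℕ → ℂ := fun n =>
  (((∑ k ∈ Finset.range n, Qs q k * (1 / q (k + 1) - 1 / q k)) - Qs q n / q n : ℝ) : ℂ)

/-- The matrix `C = (c_{nk})` associated with a sequence `a`. -/
def Cmat (q : ℕ → ℝ) (a : ℕ → ℂ) (n k : ℕ) : ℂ :=
  if k < n then ((Qs q k * (1 / q (k + 1) - 1 / q k) : ℝ) : ℂ) * ∑ j ∈ Finset.Icc (k + 1) n, a j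
  else if k = n then -(((Qs q n / q n : ℝ) : ℂ) * a n)
  else 0

/-- `exprD q a m = ∑_{k=0}^{m-1} Q_k |(1/q_{k+1} - 1/q_k) ∑_{j=k+1}^m a_j| + |Q_m a_m / q_m|`. -/
def exprD (q : ℕ → ℝ) (a : ℕ → ℂ) (m : ℕ) : ℝ :=
  (∑ k ∈ Finset.range m,
      Qs q k * ‖((1 / q (k + 1) - 1 / q k : ℝ) : ℂ) * ∑ j ∈ Finset.Icc (k + 1) m, a j‖) +
    ‖((Qs q m / q m : ℝ) : ℂ) * a m‖

/-- The space `c₀` of null complex sequences. -/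
def czero : Set (ℕ → ℂ) := {y | Tendsto y atTop (𝓝 0)}

/-- The space `c` of convergent complex sequences. -/
def cconv : Set (ℕ → ℂ) := {y | ∃ l : ℂ, Tendsto y atTop (𝓝 l)}

/-- The space `ℓ_∞` of bounded complex sequences. -/
def linf : Set (ℕ → ℂ) := {y | ∃ M : ℝ, ∀ n, ‖y n‖ ≤ M}

/-- `A ∈ (X, Y)`: for every `x ∈ X` every row series `A_n(x)` converges and `Ax ∈ Y`. -/
def matMem (A : ℕ → ℕ → ℂ) (X Y : Set (ℕ → ℂ)) : Prop :=
  ∀ x ∈ X, ∃ y ∈ Y, ∀ n,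
    Tendsto (fun m => ∑ k ∈ Finset.range (m + 1), A n k * x k) atTop (𝓝 (y n))

/-- Condition (C): `sup_{m,n} exprD q (A n) m < ∞`. -/
def condC (q : ℕ → ℝ) (A : ℕ → ℕ → ℂ) : Prop := ∃ M : ℝ, ∀ m n, exprD q (A n) m ≤ M

/-- `‖A‖^{(s)} = sup_{n > s} sup_m exprD q (A n) m`. -/
def normS (q : ℕ → ℝ) (A : ℕ → ℕ → ℂ) (s : ℕ) : ℝ :=
  ⨆ n, ⨆ (_ : s < n), ⨆ m, exprD q (A n) m

/-- The supremum distance `sup_n |y_n - z_n|` between two sequences. -/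
def supDist (y z : ℕ → ℂ) : ℝ := ⨆ n, ‖y n - z n‖

/-- The Hausdorff measure of noncompactness of `S` as a subset of the metric space `Y`
(with the supremum metric): `inf {ε > 0 : S has a finite ε-net in Y}`. -/
def chiIn (Y S : Set (ℕ → ℂ)) : ℝ :=
  sInf {ε : ℝ | 0 < ε ∧ ∃ T : Finset (ℕ → ℂ), (↑T : Set (ℕ → ℂ)) ⊆ Y ∧
    ∀ y ∈ S, ∃ t ∈ T, supDist y t < ε}

/-- The image `A F` of the closed unit ball `F = {x ∈ X : ‖x‖ ≤ 1}` under the matrix map `A`. -/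
def matImageBall (q : ℕ → ℝ) (A : ℕ → ℕ → ℂ) (X : Set (ℕ → ℂ)) : Set (ℕ → ℂ) :=
  {y | ∃ x, x ∈ X ∧ Nnorm q x ≤ 1 ∧ ∀ n,
    Tendsto (fun m => ∑ k ∈ Finset.range (m + 1), A n k * x k) atTop (𝓝 (y n))}

end

end NqDelta

open NqDelta

/-! Since `Q_n τ_n(x) = ∑_{k ≤ n} q_k (Δ⁻x)_k`, each difference `q_k (Δ⁻x)_k` is bounded by
`2 Q_k ‖x‖`, and telescoping `x_k = -∑_{j ≤ k} (Δ⁻x)_j` gives `|x_k| ≤ C_k ‖x‖`. This is the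
continuity of the coordinates, and it makes `Nnorm` definite. For completeness, a Cauchy sequence
is then Cauchy in every coordinate; its coordinatewise limit `y` has `τ_n(y)` as the limit of the
`τ_n(u_m)`, since `τ_n` only involves finitely many coordinates, so the uniform Cauchy bounds on
`τ` pass to the limit. -/

namespace NqDelta

variable {q : ℕ → ℝ}

lemma Qs_pos (hq : ∀ k, 0 < q k) (n : ℕ) : 0 < Qs q n :=
  Finset.sum_pos (fun i _ => hq i) nonempty_range_add_one

lemma Qs_le_Qs_succ (hq : ∀ k, 0 < q k) (n : ℕ) : Qs q n ≤ Qs q (n + 1) := by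
  rw [Qs, Qs, sum_range_succ _ (n + 1)]
  linarith [hq (n + 1)]

lemma tau_zero (n : ℕ) : tau q 0 n = 0 := by
  simp [tau, deltaM]

lemma deltaM_add (x y : ℕ → ℂ) (k : ℕ) : deltaM (x + y) k = deltaM x k + deltaM y k := by
  simp only [deltaM, Pi.add_apply]
  split_ifs <;> ring

lemma deltaM_smul (a : ℂ) (x : ℕ → ℂ) (k : ℕ) : deltaM (a • x) k = a * deltaM x k := by
  simp only [deltaM, Pi.smul_apply, smul_eq_mul]
  split_ifs <;> ring

lemma continuous_deltaM (k : ℕ) : Continuous fun x : ℕ → ℂ => deltaM x k := by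
  unfold deltaM
  split_ifs <;> fun_prop

lemma tau_add (x y : ℕ → ℂ) (n : ℕ) : tau q (x + y) n = tau q x n + tau q y n := by
  simp only [tau, deltaM_add, mul_add, sum_add_distrib]

lemma tau_smul (a : ℂ) (x : ℕ → ℂ) (n : ℕ) : tau q (a • x) n = a * tau q x n := by
  simp only [tau, deltaM_smul, mul_left_comm _ a, ← mul_sum]

lemma tau_sub (x y : ℕ → ℂ) (n : ℕ) : tau q (x - y) n = tau q x n - tau q y n := by
  rw [sub_eq_add_neg, ← neg_one_smul ℂ y, tau_add, tau_smul]
  ring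

lemma continuous_tau (n : ℕ) : Continuous fun x : ℕ → ℂ => tau q x n :=
  continuous_const.mul <|
    continuous_finsetSum _ fun k _ => continuous_const.mul (continuous_deltaM k)

lemma zero_mem_Ninf : (0 : ℕ → ℂ) ∈ Ninf q :=
  ⟨0, fun n => by simp [tau_zero]⟩

lemma add_mem_Ninf {x y : ℕ → ℂ} (hx : x ∈ Ninf q) (hy : y ∈ Ninf q) : x + y ∈ Ninf q := by
  obtain ⟨M, hM⟩ := hx
  obtain ⟨N, hN⟩ := hy
  exact ⟨M + N, fun n => (tau_add x y n ▸ norm_add_le _ _).trans (add_le_add (hM n) (hN n))⟩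

lemma smul_mem_Ninf (a : ℂ) {x : ℕ → ℂ} (hx : x ∈ Ninf q) : a • x ∈ Ninf q := by
  obtain ⟨M, hM⟩ := hx
  exact ⟨‖a‖ * M, fun n => by
    rw [tau_smul, norm_mul]
    exact mul_le_mul_of_nonneg_left (hM n) (norm_nonneg a)⟩

lemma sub_mem_Ninf {x y : ℕ → ℂ} (hx : x ∈ Ninf q) (hy : y ∈ Ninf q) : x - y ∈ Ninf q := by
  rw [sub_eq_add_neg, ← neg_one_smul ℂ y]
  exact add_mem_Ninf hx (smul_mem_Ninf _ hy)

lemma norm_tau_le_Nnorm {x : ℕ → ℂ} (hx : x ∈ Ninf q) (n : ℕ) : ‖tau q x n‖ ≤ Nnorm q x := by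
  obtain ⟨M, hM⟩ := hx
  exact le_ciSup ⟨M, by rintro _ ⟨m, rfl⟩; exact hM m⟩ n

lemma Nnorm_le {x : ℕ → ℂ} {M : ℝ} (hM : ∀ n, ‖tau q x n‖ ≤ M) : Nnorm q x ≤ M :=
  ciSup_le hM

lemma sum_deltaM (x : ℕ → ℂ) (k : ℕ) : ∑ j ∈ range (k + 1), deltaM x j = -x k := by
  induction k with
  | zero => simp [deltaM]
  | succ k ih =>
    rw [sum_range_succ, ih, deltaM, if_neg k.succ_ne_zero, Nat.add_sub_cancel]
    ring

lemma norm_sum_q_mul_deltaM_le (hq : ∀ k, 0 < q k) {x : ℕ → ℂ} {M : ℝ}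
    (hM : ∀ n, ‖tau q x n‖ ≤ M) (n : ℕ) :
    ‖∑ k ∈ range (n + 1), (q k : ℂ) * deltaM x k‖ ≤ Qs q n * M := by
  have hQ : (Qs q n : ℂ) ≠ 0 := by exact_mod_cast (Qs_pos hq n).ne'
  have h : ∑ k ∈ range (n + 1), (q k : ℂ) * deltaM x k = Qs q n * tau q x n := by
    rw [tau, mul_inv_cancel_left₀ hQ]
  rw [h, norm_mul, Complex.norm_real, Real.norm_of_nonneg (Qs_pos hq n).le]
  exact mul_le_mul_of_nonneg_left (hM n) (Qs_pos hq n).le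

/-- The `k`-th term of `∑ q_j (Δ⁻x)_j` is the difference of two consecutive partial sums,
each of size at most `Q_k M`. -/
lemma norm_deltaM_le (hq : ∀ k, 0 < q k) {x : ℕ → ℂ} {M : ℝ}
    (hM : ∀ n, ‖tau q x n‖ ≤ M) (k : ℕ) : ‖deltaM x k‖ ≤ 2 * Qs q k / q k * M := by
  have hM0 : 0 ≤ M := (norm_nonneg _).trans (hM 0)
  have hterm : ‖(q k : ℂ) * deltaM x k‖ ≤ 2 * Qs q k * M := by
    cases k with
    | zero =>
      have h := norm_sum_q_mul_deltaM_le hq hM 0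
      rw [sum_range_one] at h
      linarith [mul_nonneg (Qs_pos hq 0).le hM0]
    | succ k =>
      have h := norm_sum_q_mul_deltaM_le hq hM (k + 1)
      rw [sum_range_succ] at h
      have h' := norm_sum_q_mul_deltaM_le hq hM k
      have hle := mul_le_mul_of_nonneg_right (Qs_le_Qs_succ hq k) hM0
      calc ‖(q (k + 1) : ℂ) * deltaM x (k + 1)‖
          ≤ ‖∑ j ∈ range (k + 1), (q j : ℂ) * deltaM x j + (q (k + 1) : ℂ) * deltaM x (k + 1)‖
            + ‖∑ j ∈ range (k + 1), (q j : ℂ) * deltaM x j‖ := norm_le_add_norm_add' _ _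
        _ ≤ 2 * Qs q (k + 1) * M := by linarith
  rw [norm_mul, Complex.norm_real, Real.norm_of_nonneg (hq k).le] at hterm
  rw [div_mul_eq_mul_div, le_div_iff₀ (hq k)]
  linarith

noncomputable def coordBound (q : ℕ → ℝ) (k : ℕ) : ℝ := ∑ j ∈ range (k + 1), 2 * Qs q j / q j

lemma coordBound_pos (hq : ∀ k, 0 < q k) (k : ℕ) : 0 < coordBound q k :=
  Finset.sum_pos (fun j _ => by have := Qs_pos hq j; have := hq j; positivity)
    nonempty_range_add_one

lemma norm_apply_le (hq : ∀ k, 0 < q k) {x : ℕ → ℂ} {M : ℝ}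
    (hM : ∀ n, ‖tau q x n‖ ≤ M) (k : ℕ) : ‖x k‖ ≤ coordBound q k * M := by
  rw [← norm_neg, ← sum_deltaM, coordBound, sum_mul]
  exact (norm_sum_le _ _).trans (sum_le_sum fun j _ => norm_deltaM_le hq hM j)

lemma norm_apply_le_Nnorm (hq : ∀ k, 0 < q k) {x : ℕ → ℂ} (hx : x ∈ Ninf q) (k : ℕ) :
    ‖x k‖ ≤ coordBound q k * Nnorm q x :=
  norm_apply_le hq (norm_tau_le_Nnorm hx) k

lemma Nnorm_eq_zero_iff (hq : ∀ k, 0 < q k) {x : ℕ → ℂ} (hx : x ∈ Ninf q) :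
    Nnorm q x = 0 ↔ x = 0 := by
  refine ⟨fun h => funext fun k => ?_, fun h => ?_⟩
  · simpa [h] using norm_apply_le_Nnorm hq hx k
  · simp [h, Nnorm, tau_zero]

lemma Nnorm_add_le {x y : ℕ → ℂ} (hx : x ∈ Ninf q) (hy : y ∈ Ninf q) :
    Nnorm q (x + y) ≤ Nnorm q x + Nnorm q y :=
  Nnorm_le fun n => (tau_add x y n ▸ norm_add_le _ _).trans
    (add_le_add (norm_tau_le_Nnorm hx n) (norm_tau_le_Nnorm hy n))

lemma Nnorm_smul (a : ℂ) (x : ℕ → ℂ) : Nnorm q (a • x) = ‖a‖ * Nnorm q x := by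
  simp only [Nnorm, tau_smul, norm_mul]
  exact (Real.mul_iSup_of_nonneg (norm_nonneg a) _).symm

lemma norm_apply_sub_lt (hq : ∀ k, 0 < q k) {x y : ℕ → ℂ} (hx : x ∈ Ninf q) (hy : y ∈ Ninf q)
    (k : ℕ) {ε : ℝ} (hxy : Nnorm q (x - y) < ε / coordBound q k) : ‖x k - y k‖ < ε := by
  have hC := coordBound_pos hq k
  calc ‖x k - y k‖ = ‖(x - y) k‖ := rfl
    _ ≤ coordBound q k * Nnorm q (x - y) := norm_apply_le_Nnorm hq (sub_mem_Ninf hx hy) k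
    _ < coordBound q k * (ε / coordBound q k) := mul_lt_mul_of_pos_left hxy hC
    _ = ε := mul_div_cancel₀ ε hC.ne'

section Completeness

variable {u : ℕ → ℕ → ℂ}

lemma exists_tendsto_apply_of_cauchy (hq : ∀ k, 0 < q k) (hu : ∀ m, u m ∈ Ninf q)
    (hc : ∀ ε > 0, ∃ N, ∀ m₁ ≥ N, ∀ m₂ ≥ N, Nnorm q (u m₁ - u m₂) < ε) :
    ∃ y, Tendsto u atTop (𝓝 y) := by
  have hcauchy (k : ℕ) : CauchySeq fun m => u m k := by
    refine Metric.cauchySeq_iff.2 fun ε hε => ?_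
    obtain ⟨N, hN⟩ := hc (ε / coordBound q k) (div_pos hε (coordBound_pos hq k))
    exact ⟨N, fun m₁ hm₁ m₂ hm₂ =>
      dist_eq_norm (u m₁ k) _ ▸ norm_apply_sub_lt hq (hu m₁) (hu m₂) k (hN m₁ hm₁ m₂ hm₂)⟩
  choose y hy using fun k => cauchySeq_tendsto_of_complete (hcauchy k)
  exact ⟨y, tendsto_pi_nhds.2 hy⟩

/-- Letting `m₂ → ∞` in `|τ_n(u m₁) - τ_n(u m₂)| < ε`. -/
lemma norm_tau_sub_le_of_cauchy (hu : ∀ m, u m ∈ Ninf q) {y : ℕ → ℂ}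
    (hy : Tendsto u atTop (𝓝 y)) {ε : ℝ} {N : ℕ}
    (hN : ∀ m₁ ≥ N, ∀ m₂ ≥ N, Nnorm q (u m₁ - u m₂) < ε) {m : ℕ} (hm : N ≤ m) (n : ℕ) :
    ‖tau q (u m) n - tau q y n‖ ≤ ε := by
  have hlim : Tendsto (fun m₂ => ‖tau q (u m) n - tau q (u m₂) n‖) atTop
      (𝓝 ‖tau q (u m) n - tau q y n‖) :=
    (tendsto_const_nhds.sub (((continuous_tau n).tendsto y).comp hy)).norm
  refine le_of_tendsto hlim ?_
  filter_upwards [eventually_ge_atTop N] with m₂ hm₂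
  rw [← tau_sub]
  exact (norm_tau_le_Nnorm (sub_mem_Ninf (hu m) (hu m₂)) n).trans (hN m hm m₂ hm₂).le

lemma exists_tendsto_Nnorm_of_cauchy (hq : ∀ k, 0 < q k) (hu : ∀ m, u m ∈ Ninf q)
    (hc : ∀ ε > 0, ∃ N, ∀ m₁ ≥ N, ∀ m₂ ≥ N, Nnorm q (u m₁ - u m₂) < ε) :
    ∃ y ∈ Ninf q, ∀ ε > (0 : ℝ), ∃ N, ∀ m ≥ N, Nnorm q (u m - y) < ε := by
  obtain ⟨y, hy⟩ := exists_tendsto_apply_of_cauchy hq hu hc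
  have hmem : y ∈ Ninf q := by
    obtain ⟨N, hN⟩ := hc 1 one_pos
    obtain ⟨M, hM⟩ := hu N
    refine ⟨M + 1, fun n => ?_⟩
    have h := norm_tau_sub_le_of_cauchy hu hy hN le_rfl n
    calc ‖tau q y n‖ ≤ ‖tau q (u N) n‖ + ‖tau q (u N) n - tau q y n‖ :=
          norm_le_norm_add_norm_sub _ _
      _ ≤ M + 1 := add_le_add (hM n) h
  refine ⟨y, hmem, fun ε hε => ?_⟩
  obtain ⟨N, hN⟩ := hc (ε / 2) (half_pos hε)
  refine ⟨N, fun m hm => (Nnorm_le fun n => ?_).trans_lt (half_lt_self hε)⟩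
  rw [tau_sub]
  exact norm_tau_sub_le_of_cauchy hu hy hN hm n

end Completeness

end NqDelta

/-- `(N̄^q_{Δ⁻})_∞`, with the norm `‖x‖ = sup_n |τ_n(x)|`, is a BK space:
it is a Banach space over `ℂ` (a `ℂ`-vector space on which `Nnorm` is a complete norm),
and for each `k` the coordinate functional `x ↦ x_k` is continuous on it. -/
theorem stmt_0 (q : ℕ → ℝ) (hq : ∀ k, 0 < q k) :
    -- `(N̄^q_{Δ⁻})_∞` is a `ℂ`-linear subspace of the space of all sequences:
    ((0 : ℕ → ℂ) ∈ Ninf q) ∧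
    (∀ x ∈ Ninf q, ∀ y ∈ Ninf q, x + y ∈ Ninf q) ∧
    (∀ a : ℂ, ∀ x ∈ Ninf q, a • x ∈ Ninf q) ∧
    -- `Nnorm` is a norm on it:
    (∀ x ∈ Ninf q, (Nnorm q x = 0 ↔ x = 0)) ∧
    (∀ x ∈ Ninf q, ∀ y ∈ Ninf q, Nnorm q (x + y) ≤ Nnorm q x + Nnorm q y) ∧
    (∀ a : ℂ, ∀ x ∈ Ninf q, Nnorm q (a • x) = ‖a‖ * Nnorm q x) ∧
    -- it is complete (every Cauchy sequence converges in the space):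
    (∀ u : ℕ → (ℕ → ℂ), (∀ m, u m ∈ Ninf q) →
      (∀ ε > (0 : ℝ), ∃ N, ∀ m₁ ≥ N, ∀ m₂ ≥ N, Nnorm q (u m₁ - u m₂) < ε) →
      ∃ y ∈ Ninf q, ∀ ε > (0 : ℝ), ∃ N, ∀ m ≥ N, Nnorm q (u m - y) < ε) ∧
    -- each coordinate functional `x ↦ x_k` is continuous:
    (∀ k : ℕ, ∀ x ∈ Ninf q, ∀ ε > (0 : ℝ), ∃ δ > (0 : ℝ), ∀ y ∈ Ninf q,
      Nnorm q (y - x) < δ → ‖y k - x k‖ < ε) := by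
  refine ⟨zero_mem_Ninf, fun x hx y hy => add_mem_Ninf hx hy, fun a x hx => smul_mem_Ninf a hx,
    fun x hx => Nnorm_eq_zero_iff hq hx, fun x hx y hy => Nnorm_add_le hx hy,
    fun a x _ => Nnorm_smul a x, fun u hu hc => exists_tendsto_Nnorm_of_cauchy hq hu hc, ?_⟩
  intro k x hx ε hε
  exact ⟨ε / coordBound q k, div_pos hε (coordBound_pos hq k),
    fun y hy hyx => norm_apply_sub_lt hq hy hx k hyx⟩
end

section
/- The sequence (s^{(k)})_{k∈ℕ} is a Schauder basis of (N̄^q_{Δ⁻})_0: every x ∈ (N̄^q_{Δ⁻})_0 has a unique representation x = ∑_{k=0}^∞ λ_k s^{(k)}, where the partial sums converge to x in the norm ‖x‖ = sup_n |τ_n(x)| and the coefficients are λ_k = τ_k(x). -/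
open Finset Filter Topology

open NqDelta

/-! τ is linear and `τ(s^{(k)}) = e_k`, since the `s^{(k)}` are the columns of the inverse of
the triangle defining τ. Hence τ of the remainder `x - ∑_{k ≤ m} λ_k s^{(k)}` agrees with `τ(x)`
beyond `m` and equals `τ_n(x) - λ_n` for `n ≤ m`. With `λ = τ(x)` its norm is a tail supremum of
`|τ_n(x)|`, which tends to `0`; for arbitrary `λ` it dominates `|τ_j(x) - λ_j|` once `m ≥ j`,
which forces `λ = τ(x)`. -/

namespace NqDelta

variable {q : ℕ → ℝ}

variable (q) in
noncomputable def tauₗ (n : ℕ) : (ℕ → ℂ) →ₗ[ℂ] ℂ where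
  toFun x := tau q x n
  map_add' x y := by
    simp only [tau, deltaM, Pi.add_apply, ← mul_add, ← sum_add_distrib]
    congr 1; refine sum_congr rfl fun k _ => ?_; split_ifs <;> ring
  map_smul' c x := by
    simp only [tau, deltaM, Pi.smul_apply, smul_eq_mul, RingHom.id_apply, Finset.mul_sum]
    refine sum_congr rfl fun k _ => ?_; split_ifs <;> ring

lemma tauₗ_apply (n : ℕ) (x : ℕ → ℂ) : tauₗ q n x = tau q x n := rfl

lemma q_mul_deltaM_sseq (hq : ∀ k, 0 < q k) (k m : ℕ) :
    (q m : ℂ) * deltaM (sseq q k) m =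
      (if m = k then (Qs q k : ℂ) else 0) - (if m = k + 1 then (Qs q k : ℂ) else 0) := by
  have hm : (q m : ℂ) ≠ 0 := by exact_mod_cast (hq m).ne'
  have hk : (q k : ℂ) ≠ 0 := by exact_mod_cast (hq k).ne'
  rcases m with _ | m <;>
  simp only [deltaM, sseq, Nat.add_sub_cancel, Nat.add_one_ne_zero, if_true, if_false] <;>
  split_ifs <;> first | contradiction | omega | (subst_vars; push_cast; field_simp; ring)

lemma tau_sseq (hq : ∀ k, 0 < q k) (k n : ℕ) : tau q (sseq q k) n = if n = k then 1 else 0 := by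
  have hQ : (Qs q k : ℂ) ≠ 0 := by exact_mod_cast (Qs_pos hq k).ne'
  simp only [tau, q_mul_deltaM_sseq hq, sum_sub_distrib, sum_ite_eq', mem_range]
  rcases lt_trichotomy n k with h | rfl | h
  · simp [h.ne, not_le.2 h, not_lt.2 h.le]
  · simp [hQ]
  · simp [h.ne', h, h.le]

lemma tau_sub_sum_smul_sseq (hq : ∀ k, 0 < q k) (x lam : ℕ → ℂ) (m n : ℕ) :
    tau q (x - ∑ k ∈ range (m + 1), lam k • sseq q k) n =
      tau q x n - if n ≤ m then lam n else 0 := by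
  simp only [← tauₗ_apply, map_sub, map_sum, map_smul]
  simp [tauₗ_apply, tau_sseq hq]

lemma sseq_mem_Nzero (hq : ∀ k, 0 < q k) (k : ℕ) : sseq q k ∈ Nzero q :=
  tendsto_const_nhds.congr' <| (eventually_gt_atTop k).mono fun n hn => by
    rw [tau_sseq hq, if_neg hn.ne']

lemma Nnorm_nonneg (x : ℕ → ℂ) : 0 ≤ Nnorm q x :=
  Real.iSup_nonneg fun _ => norm_nonneg _

lemma Nzero_subset_Ninf : Nzero q ⊆ Ninf q := fun _ hx =>
  let ⟨M, hM⟩ := hx.norm.bddAbove_range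
  ⟨M, fun n => hM ⟨n, rfl⟩⟩

theorem tendsto_Nnorm_sub_sum_tau_smul_sseq (hq : ∀ k, 0 < q k) {x : ℕ → ℂ}
    (hx : x ∈ Nzero q) :
    Tendsto (fun m => Nnorm q (x - ∑ k ∈ range (m + 1), tau q x k • sseq q k)) atTop (𝓝 0) := by
  refine tendsto_order.2 ⟨fun a ha => .of_forall fun m => ha.trans_le (Nnorm_nonneg _),
    fun ε hε => ?_⟩
  obtain ⟨N, hN⟩ := eventually_atTop.1 <|
    hx.norm.eventually (ge_mem_nhds (by simpa using half_pos hε : ‖(0 : ℂ)‖ < ε / 2))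
  refine eventually_atTop.2 ⟨N, fun m hm => (ciSup_le fun n => ?_).trans_lt (half_lt_self hε)⟩
  rw [tau_sub_sum_smul_sseq hq]
  split_ifs with hn
  · simpa using (half_pos hε).le
  · simpa using hN n (by omega)

theorem eq_tau_of_tendsto_Nnorm_sub_sum_smul_sseq (hq : ∀ k, 0 < q k) {x lam : ℕ → ℂ}
    (hx : x ∈ Nzero q)
    (hlam : Tendsto (fun m => Nnorm q (x - ∑ k ∈ range (m + 1), lam k • sseq q k)) atTop (𝓝 0)) :
    lam = tau q x := by
  funext j
  have hle : ∀ m ≥ j,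
      ‖tau q x j - lam j‖ ≤ Nnorm q (x - ∑ k ∈ range (m + 1), lam k • sseq q k) := by
    intro m hm
    have hrem : x - ∑ k ∈ range (m + 1), lam k • sseq q k ∈ Nzero q :=
      hx.congr' <| (eventually_gt_atTop m).mono fun n hn => by
        rw [tau_sub_sum_smul_sseq hq, if_neg (by omega), sub_zero]
    simpa [tau_sub_sum_smul_sseq hq, hm] using norm_tau_le_Nnorm (Nzero_subset_Ninf hrem) j
  have := ge_of_tendsto hlam (eventually_atTop.2 ⟨j, hle⟩)
  exact (sub_eq_zero.1 (norm_le_zero_iff.1 this)).symm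

end NqDelta

/-- `(s^{(k)})_{k∈ℕ}` is a Schauder basis of `(N̄^q_{Δ⁻})_0`: every `x` in the
space has the unique representation `x = ∑_k λ_k s^{(k)}` with `λ_k = τ_k(x)`, the partial
sums converging to `x` in the norm `‖x‖ = sup_n |τ_n(x)|`. -/
theorem stmt_3 (q : ℕ → ℝ) (hq : ∀ k, 0 < q k) :
    (∀ k, sseq q k ∈ Nzero q) ∧
    ∀ x ∈ Nzero q,
      -- existence: the partial sums with coefficients `λ_k = τ_k(x)` converge to `x` in norm
      (Tendsto (fun m => Nnorm q (x - ∑ k ∈ Finset.range (m + 1), tau q x k • sseq q k))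
        atTop (𝓝 0)) ∧
      -- uniqueness of the coefficients
      (∀ lam : ℕ → ℂ,
        Tendsto (fun m => Nnorm q (x - ∑ k ∈ Finset.range (m + 1), lam k • sseq q k))
          atTop (𝓝 0) →
        lam = fun k => tau q x k) :=
  ⟨sseq_mem_Nzero hq, fun _ hx => ⟨tendsto_Nnorm_sub_sum_tau_smul_sseq hq hx,
    fun _ hlam => eq_tau_of_tendsto_Nnorm_sub_sum_smul_sseq hq hx hlam⟩⟩
end
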